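/- Let p be an odd prime, v ∈ ℚ_p a p-adic unit that is not a square in ℚ_p, A = diag(1, -v, p), Q_+(x) = xᵀAx, B(x,y) = xᵀAy, and SO(3)_p = {L ∈ M₃(ℚ_p) : LᵀAL = A, det L = 1}. Let (g, h, n) be a basis of ℚ_p³ pairwise orthogonal with respect to B. Then Q_+(g) ≠ 0; set α = Q_+(h)/Q_+(g). For every L ∈ SO(3)_p with L n = n, exactly one of the following holds: either (L g = −g and L h = −h), or there exists a unique σ ∈ ℚ_p (with 1 + ασ² ≠ 0) such that L g = ((1−ασ²)/(1+ασ²))·g + (2σ/(1+ασ²))·h and L h = (−2ασ/(1+ασ²))·g + ((1−ασ²)/(1+ασ²))·h. Conversely, for every σ ∈ ℚ_p these formulas together with L n = n define an element of SO(3)_p, and the map sending g ↦ −g, h ↦ −h, n ↦ n also lies in SO(3)_p. -/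

import Mathlib

/-!
As `p` is odd and `v` is a non-square unit, `‖x² - v y²‖ = max (‖x‖, ‖y‖)²` has even
valuation, whereas `p z²` has odd valuation; so `Q₊` is anisotropic. Hence `Q₊(g) ≠ 0`, and
`1 + α σ² = Q₊(g + σ h) / Q₊(g) ≠ 0`.

An isometry `L` fixing `n` preserves `n^⊥ = span (g, h)`. In the coordinates `(g, h)` the
isometry equations and `det L = 1` force the matrix `[[a, -α b], [b, a]]` with `a² + α b² = 1`,
and conversely every such matrix, extended by `n ↦ n`, is in `SO(3)_p`. The point `(-1, 0)` of
the conic `a² + α b² = 1` gives `L = -1` on `span (g, h)`; every other point is the second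
intersection of the conic with the line of slope `σ` through `(-1, 0)`, i.e. `σ = b / (1 + a)`.
-/

open Matrix

namespace PadicInt

variable {p : ℕ} [Fact p.Prime]

open Polynomial in
theorem isSquare_of_norm_sq_sub_lt (hp : p ≠ 2) {t v : ℤ_[p]} (h : ‖t ^ 2 - v‖ < ‖t‖ ^ 2) :
    IsSquare v := by
  have h2 : ‖(2 : ℤ_[p])‖ = 1 := by
    exact_mod_cast
      norm_natCast_eq_one_iff.2 ((Nat.coprime_primes Fact.out Nat.prime_two).2 hp)
  have hF : ‖aeval t (X ^ 2 - C v)‖ < ‖aeval t (derivative (X ^ 2 - C v))‖ ^ 2 := by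
    simpa [← two_mul, h2] using h
  obtain ⟨z, hz, -⟩ := hensels_lemma hF
  exact ⟨z, by simpa [sub_eq_zero, eq_comm, sq] using hz⟩

end PadicInt

namespace Padic

variable {p : ℕ} [Fact p.Prime]

theorem norm_sq_sub_eq_one (hp : p ≠ 2) {v : ℚ_[p]} (hv : ‖v‖ = 1) (hvsq : ¬IsSquare v)
    {t : ℚ_[p]} (ht : ‖t‖ = 1) : ‖t ^ 2 - v‖ = 1 := by
  refine le_antisymm ?_ (not_lt.1 fun hlt => hvsq ?_)
  · rw [sub_eq_add_neg]
    exact (nonarchimedean _ _).trans_eq (by simp [ht, hv])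
  · obtain ⟨t, rfl⟩ : ∃ T : ℤ_[p], (T : ℚ_[p]) = t := ⟨⟨t, ht.le⟩, rfl⟩
    obtain ⟨v, rfl⟩ : ∃ V : ℤ_[p], (V : ℚ_[p]) = v := ⟨⟨v, hv.le⟩, rfl⟩
    refine (PadicInt.isSquare_of_norm_sq_sub_lt hp (t := t) ?_).map PadicInt.Coe.ringHom
    simpa [PadicInt.norm_def, ht] using hlt

theorem norm_sq_sub_mul_sq (hp : p ≠ 2) {v : ℚ_[p]} (hv : ‖v‖ = 1) (hvsq : ¬IsSquare v)
    (x y : ℚ_[p]) : ‖x ^ 2 - v * y ^ 2‖ = max (‖x‖ ^ 2) (‖y‖ ^ 2) := by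
  by_cases hxy : ‖x‖ = ‖y‖
  · rcases eq_or_ne y 0 with rfl | hy
    · simp_all
    have hx : ‖x / y‖ = 1 := by rw [norm_div, hxy, div_self (norm_ne_zero_iff.2 hy)]
    rw [show x ^ 2 - v * y ^ 2 = y ^ 2 * ((x / y) ^ 2 - v) by field_simp, norm_mul, norm_pow,
      norm_sq_sub_eq_one hp hv hvsq hx, hxy, max_self, mul_one]
  · have hne : ‖x ^ 2‖ ≠ ‖-(v * y ^ 2)‖ := by
      simpa [hv] using fun h =>
        hxy ((pow_left_inj₀ (norm_nonneg x) (norm_nonneg y) two_ne_zero).1 h)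
    simpa [sub_eq_add_neg, hv] using add_eq_max_of_ne hne

theorem norm_sq_ne_norm_p (w : ℚ_[p]) : ‖w‖ ^ 2 ≠ ‖(p : ℚ_[p])‖ := by
  rcases eq_or_ne w 0 with rfl | hw
  · simp [eq_comm, (Fact.out : p.Prime).ne_zero]
  have hp1 : (1 : ℝ) < p := by exact_mod_cast (Fact.out : p.Prime).one_lt
  rw [norm_eq_zpow_neg_valuation hw, norm_p, ← zpow_natCast, ← _root_.zpow_mul,
    ← _root_.zpow_neg_one]
  intro h
  have := zpow_right_injective₀ (by positivity) hp1.ne' h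
  omega

theorem eq_zero_of_sq_sub_mul_sq_add_p_mul_sq_eq_zero (hp : p ≠ 2) {v : ℚ_[p]} (hv : ‖v‖ = 1)
    (hvsq : ¬IsSquare v) {x y z : ℚ_[p]} (h : x ^ 2 - v * y ^ 2 + p * z ^ 2 = 0) :
    x = 0 ∧ y = 0 ∧ z = 0 := by
  have hnorm : max (‖x‖ ^ 2) (‖y‖ ^ 2) = ‖(p : ℚ_[p])‖ * ‖z‖ ^ 2 := by
    rw [← norm_sq_sub_mul_sq hp hv hvsq, eq_neg_of_add_eq_zero_left h, norm_neg, norm_mul,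
      norm_pow]
  obtain rfl : z = 0 := by
    by_contra hz
    obtain ⟨c, hc⟩ : ∃ c : ℚ_[p], max (‖x‖ ^ 2) (‖y‖ ^ 2) = ‖c‖ ^ 2 :=
      (max_choice _ _).elim (fun e => ⟨x, e⟩) (fun e => ⟨y, e⟩)
    apply norm_sq_ne_norm_p (c / z)
    rw [norm_div, div_pow, ← hc, hnorm]
    field_simp
  rw [norm_zero, zero_pow two_ne_zero, mul_zero] at hnorm
  refine ⟨?_, ?_, rfl⟩ <;> rw [← norm_eq_zero] <;>
    nlinarith [le_max_left (‖x‖ ^ 2) (‖y‖ ^ 2), le_max_right (‖x‖ ^ 2) (‖y‖ ^ 2)]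

theorem eq_zero_of_dotProduct_diagonal_mulVec_self_eq_zero (hp : p ≠ 2) {v : ℚ_[p]}
    (hv : ‖v‖ = 1) (hvsq : ¬IsSquare v) {z : Fin 3 → ℚ_[p]}
    (hz : z ⬝ᵥ diagonal ![1, -v, (p : ℚ_[p])] *ᵥ z = 0) : z = 0 := by
  obtain ⟨h0, h1, h2⟩ := eq_zero_of_sq_sub_mul_sq_add_p_mul_sq_eq_zero hp hv hvsq
    (x := z 0) (y := z 1) (z := z 2) (by
      simp [mulVec_diagonal, dotProduct, Fin.sum_univ_three] at hz
      linear_combination hz)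
  ext i
  fin_cases i <;> assumption

end Padic

section CayleyParametrization

variable {K : Type*} [Field K] {α a b : K}

theorem cayley_ne_neg_one (h2 : (2 : K) ≠ 0) {σ : K} (hσ : 1 + α * σ ^ 2 ≠ 0) :
    (1 - α * σ ^ 2) / (1 + α * σ ^ 2) ≠ -1 := by
  rw [Ne, div_eq_iff hσ]
  intro h
  exact h2 (by linear_combination h)

theorem cayley_sq_add_mul_sq {σ : K} (hσ : 1 + α * σ ^ 2 ≠ 0) :
    ((1 - α * σ ^ 2) / (1 + α * σ ^ 2)) ^ 2 + α * (2 * σ / (1 + α * σ ^ 2)) ^ 2 = 1 := by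
  field_simp
  ring

theorem existsUnique_cayley (h2 : (2 : K) ≠ 0) (hab : a ^ 2 + α * b ^ 2 = 1) (ha : a ≠ -1) :
    ∃! σ : K, 1 + α * σ ^ 2 ≠ 0 ∧
      a = (1 - α * σ ^ 2) / (1 + α * σ ^ 2) ∧ b = 2 * σ / (1 + α * σ ^ 2) := by
  have ha' : 1 + a ≠ 0 := fun h => ha (by linear_combination h)
  have hden : 1 + α * (b / (1 + a)) ^ 2 = 2 / (1 + a) := by
    field_simp
    linear_combination hab
  refine ⟨b / (1 + a), ⟨?_, ?_, ?_⟩, ?_⟩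
  · rw [hden]; exact div_ne_zero h2 ha'
  · rw [hden]; field_simp; linear_combination hab
  · rw [hden]; field_simp
  · rintro σ ⟨hσ, rfl, rfl⟩
    have hσ1 : 1 + (1 - α * σ ^ 2) / (1 + α * σ ^ 2) = 2 / (1 + α * σ ^ 2) := by
      field_simp; ring
    rw [hσ1, div_div_div_cancel_right₀ hσ, mul_div_cancel_left₀ σ h2]

variable {V : Type*} [AddCommGroup V] [Module K V]

theorem LinearIndependent.eq_and_eq_of_smul_add_smul_eq {x y : V}
    (hxy : LinearIndependent K ![x, y]) {s t s' t' : K}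
    (h : s • x + t • y = s' • x + t' • y) : s = s' ∧ t = t' := by
  have := LinearIndependent.pair_iff.1 hxy (s - s') (t - t')
    (by linear_combination (norm := module) h)
  exact ⟨sub_eq_zero.1 this.1, sub_eq_zero.1 this.2⟩

theorem xor_eq_neg_existsUnique_cayley (h2 : (2 : K) ≠ 0) {x y x' y' : V}
    (hxy : LinearIndependent K ![x, y]) {α a b : K} (hα : α ≠ 0) (hab : a ^ 2 + α * b ^ 2 = 1)
    (hx' : x' = a • x + b • y) (hy' : y' = (-(α * b)) • x + a • y) :
    Xor (x' = -x ∧ y' = -y)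
      (∃! σ : K, 1 + α * σ ^ 2 ≠ 0 ∧
        x' = ((1 - α * σ ^ 2) / (1 + α * σ ^ 2)) • x + (2 * σ / (1 + α * σ ^ 2)) • y ∧
        y' = (-(2 * α * σ) / (1 + α * σ ^ 2)) • x + ((1 - α * σ ^ 2) / (1 + α * σ ^ 2)) • y) := by
  have hneg : (x' = -x ∧ y' = -y) ↔ a = -1 := by
    refine ⟨fun h => ?_, fun ha => ?_⟩
    · exact (hxy.eq_and_eq_of_smul_add_smul_eq (t' := 0) (by rw [← hx', h.1]; module)).1
    · obtain rfl : b = 0 := by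
        simpa [hα] using (show α * b ^ 2 = 0 by linear_combination hab - (a - 1) * ha)
      subst ha
      constructor <;> simp [hx', hy']
  have hcayley : ∀ σ : K, (1 + α * σ ^ 2 ≠ 0 ∧
      x' = ((1 - α * σ ^ 2) / (1 + α * σ ^ 2)) • x + (2 * σ / (1 + α * σ ^ 2)) • y ∧
      y' = (-(2 * α * σ) / (1 + α * σ ^ 2)) • x + ((1 - α * σ ^ 2) / (1 + α * σ ^ 2)) • y) ↔
      (1 + α * σ ^ 2 ≠ 0 ∧
        a = (1 - α * σ ^ 2) / (1 + α * σ ^ 2) ∧ b = 2 * σ / (1 + α * σ ^ 2)) := by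
    refine fun σ => and_congr_right fun _ =>
      ⟨fun h => hxy.eq_and_eq_of_smul_add_smul_eq (hx' ▸ h.1), ?_⟩
    rintro ⟨rfl, rfl⟩
    refine ⟨hx', hy'.trans ?_⟩
    congr 2
    ring
  have hrot : (∃! σ : K, 1 + α * σ ^ 2 ≠ 0 ∧
      a = (1 - α * σ ^ 2) / (1 + α * σ ^ 2) ∧ b = 2 * σ / (1 + α * σ ^ 2)) ↔ a ≠ -1 :=
    ⟨fun ⟨σ, ⟨hσ, ha, _⟩, _⟩ => ha ▸ cayley_ne_neg_one h2 hσ, existsUnique_cayley h2 hab⟩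
  rw [existsUnique_congr hcayley, hneg, hrot]
  exact xor_not_right.2 Iff.rfl

end CayleyParametrization

namespace Matrix

section Bilinear

variable {R ι : Type*} [CommRing R] [Fintype ι] {A : Matrix ι ι R} {g h n : ι → R}

theorem IsSymm.dotProduct_mulVec_comm (hA : A.IsSymm) (x y : ι → R) :
    x ⬝ᵥ A *ᵥ y = y ⬝ᵥ A *ᵥ x := by
  rw [dotProduct_mulVec, ← mulVec_transpose, hA.eq, dotProduct_comm]

theorem smul_add_smul_dotProduct_mulVec_smul_add_smul (hA : A.IsSymm)
    (hgh : g ⬝ᵥ A *ᵥ h = 0) (a b c d : R) :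
    (a • g + b • h) ⬝ᵥ A *ᵥ (c • g + d • h) =
      a * c * (g ⬝ᵥ A *ᵥ g) + b * d * (h ⬝ᵥ A *ᵥ h) := by
  have hhg : h ⬝ᵥ A *ᵥ g = 0 := hA.dotProduct_mulVec_comm h g ▸ hgh
  simp only [mulVec_add, mulVec_smul, dotProduct_add, add_dotProduct, dotProduct_smul,
    smul_dotProduct, smul_eq_mul, hgh, hhg]
  ring

theorem smul_add_smul_dotProduct_mulVec_eq_zero (hgn : g ⬝ᵥ A *ᵥ n = 0)
    (hhn : h ⬝ᵥ A *ᵥ n = 0) (a b : R) : (a • g + b • h) ⬝ᵥ A *ᵥ n = 0 := by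
  simp [add_dotProduct, hgn, hhn]

theorem dotProduct_mulVec_smul_add_smul_eq_zero (hng : n ⬝ᵥ A *ᵥ g = 0)
    (hnh : n ⬝ᵥ A *ᵥ h = 0) (a b : R) : n ⬝ᵥ A *ᵥ (a • g + b • h) = 0 := by
  simp [mulVec_add, mulVec_smul, hng, hnh]

end Bilinear

section Basis

variable {K ι : Type*} [Field K] [Fintype ι] [DecidableEq ι]

theorem transpose_mul_mul_eq_self_iff_of_linearIndependent {v : ι → ι → K}
    (hv : LinearIndependent K v) {L A : Matrix ι ι K} :
    Lᵀ * A * L = A ↔ ∀ i j, (L *ᵥ v i) ⬝ᵥ A *ᵥ (L *ᵥ v j) = v i ⬝ᵥ A *ᵥ v j := by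
  let b := basisOfLinearIndependentOfCardEqFinrank' v hv (by simp)
  have hL : ∀ x y, (L *ᵥ x) ⬝ᵥ A *ᵥ (L *ᵥ y) = x ⬝ᵥ (Lᵀ * A * L) *ᵥ y := by
    intro x y
    rw [← mulVec_mulVec, ← mulVec_mulVec, dotProduct_mulVec x, vecMul_transpose]
  simp_rw [hL]
  refine ⟨fun h i j => by rw [h], fun h => toBilin'.injective ?_⟩
  exact LinearMap.BilinForm.ext_basis b fun i j => by simpa [b, toBilin'_apply'] using h i j

theorem det_eq_of_mulVec_eq_sum {v : ι → ι → K} (hv : LinearIndependent K v)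
    {L M : Matrix ι ι K} (hL : ∀ j, L *ᵥ v j = ∑ i, M i j • v i) : L.det = M.det := by
  set b := basisOfLinearIndependentOfCardEqFinrank' v hv (by simp)
  have hb : ⇑b = v := coe_basisOfLinearIndependentOfCardEqFinrank' ..
  have hM : LinearMap.toMatrix b b (toLin' L) = M := by
    ext i j
    rw [LinearMap.toMatrix_apply, toLin'_apply, hb, hL, ← hb, b.repr_sum_self]
  rw [← LinearMap.det_toLin', ← LinearMap.det_toMatrix b, hM]

end Basis

section OrthogonalBasis

variable {K : Type*} [Field K] {A L : Matrix (Fin 3) (Fin 3) K} {g h n : Fin 3 → K}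

theorem exists_eq_smul_add_smul_of_dotProduct_mulVec_eq_zero
    (hbasis : LinearIndependent K ![g, h, n]) (hgn : g ⬝ᵥ A *ᵥ n = 0)
    (hhn : h ⬝ᵥ A *ᵥ n = 0) (hn : n ⬝ᵥ A *ᵥ n ≠ 0) {x : Fin 3 → K}
    (hx : x ⬝ᵥ A *ᵥ n = 0) : ∃ a b : K, x = a • g + b • h := by
  let e := basisOfLinearIndependentOfCardEqFinrank' _ hbasis (by simp)
  have hx' : x = e.repr x 0 • g + e.repr x 1 • h + e.repr x 2 • n := by
    simpa [e, Fin.sum_univ_three] using (e.sum_repr x).symm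
  have h2 : e.repr x 2 = 0 := by
    rw [hx', add_dotProduct, smul_add_smul_dotProduct_mulVec_eq_zero hgn hhn, zero_add,
      smul_dotProduct, smul_eq_mul] at hx
    exact (mul_eq_zero.1 hx).resolve_right hn
  exact ⟨_, _, by rw [hx', h2, zero_smul, add_zero]⟩

theorem det_eq_of_mulVec_eq_smul_add_smul (hbasis : LinearIndependent K ![g, h, n])
    {a b d e : K} (hLg : L *ᵥ g = a • g + b • h) (hLh : L *ᵥ h = d • g + e • h)
    (hLn : L *ᵥ n = n) : L.det = a * e - b * d := by
  rw [det_eq_of_mulVec_eq_sum hbasis (M := !![a, d, 0; b, e, 0; 0, 0, 1])]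
  · simp [det_fin_three]
    ring
  · intro j
    fin_cases j <;> simp [Fin.sum_univ_three, hLg, hLh, hLn]

theorem transpose_mul_mul_eq_self_iff_of_mulVec_eq (hA : A.IsSymm)
    (hbasis : LinearIndependent K ![g, h, n]) (hgh : g ⬝ᵥ A *ᵥ h = 0) (hgn : g ⬝ᵥ A *ᵥ n = 0)
    (hhn : h ⬝ᵥ A *ᵥ n = 0) (hg : g ⬝ᵥ A *ᵥ g ≠ 0) {α : K}
    (hα : h ⬝ᵥ A *ᵥ h = α * (g ⬝ᵥ A *ᵥ g)) {a b d e : K} (hLg : L *ᵥ g = a • g + b • h)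
    (hLh : L *ᵥ h = d • g + e • h) (hLn : L *ᵥ n = n) :
    Lᵀ * A * L = A ↔
      a ^ 2 + α * b ^ 2 = 1 ∧ a * d + α * b * e = 0 ∧ d ^ 2 + α * e ^ 2 = α := by
  have hng : n ⬝ᵥ A *ᵥ g = 0 := hA.dotProduct_mulVec_comm n g ▸ hgn
  have hnh : n ⬝ᵥ A *ᵥ h = 0 := hA.dotProduct_mulVec_comm n h ▸ hhn
  have hform : ∀ c₁ c₂ c₃ c₄ : K, (c₁ • g + c₂ • h) ⬝ᵥ A *ᵥ (c₃ • g + c₄ • h) =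
      (c₁ * c₃ + α * c₂ * c₄) * (g ⬝ᵥ A *ᵥ g) := fun c₁ c₂ c₃ c₄ => by
    rw [smul_add_smul_dotProduct_mulVec_smul_add_smul hA hgh, hα]; ring
  rw [transpose_mul_mul_eq_self_iff_of_linearIndependent hbasis]
  constructor
  · intro hL
    have hgg := hL 0 0
    have hgh' := hL 0 1
    have hhh := hL 1 1
    simp only [Fin.isValue, cons_val_zero, cons_val_one, hLg, hLh, hform, hα, hgh]
      at hgg hgh' hhh
    exact ⟨mul_right_cancel₀ hg (by linear_combination hgg),
      mul_right_cancel₀ hg (by linear_combination hgh'),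
      mul_right_cancel₀ hg (by linear_combination hhh)⟩
  · rintro ⟨h₁, h₂, h₃⟩ i j
    have hhg : h ⬝ᵥ A *ᵥ g = 0 := hA.dotProduct_mulVec_comm h g ▸ hgh
    have h₁' : a * a + α * b * b = 1 := by linear_combination h₁
    have h₂' : d * a + α * e * b = 0 := by linear_combination h₂
    have h₃' : d * d + α * e * e = α := by linear_combination h₃
    fin_cases i <;> fin_cases j <;>
      simp [hLg, hLh, hLn, hform, hα, hgh, hhg, hgn, hhn, hng, hnh, h₁', h₂, h₂', h₃',
        dotProduct_mulVec_smul_add_smul_eq_zero hng hnh]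

theorem exists_rotation_coeffs_of_mulVec_eq_self (hA : A.IsSymm)
    (hbasis : LinearIndependent K ![g, h, n])
    (hgh : g ⬝ᵥ A *ᵥ h = 0) (hgn : g ⬝ᵥ A *ᵥ n = 0) (hhn : h ⬝ᵥ A *ᵥ n = 0)
    (hg : g ⬝ᵥ A *ᵥ g ≠ 0) (hn : n ⬝ᵥ A *ᵥ n ≠ 0) {α : K}
    (hα : h ⬝ᵥ A *ᵥ h = α * (g ⬝ᵥ A *ᵥ g)) (hL : Lᵀ * A * L = A) (hdet : L.det = 1)
    (hLn : L *ᵥ n = n) :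
    ∃ a b : K, a ^ 2 + α * b ^ 2 = 1 ∧
      L *ᵥ g = a • g + b • h ∧ L *ᵥ h = (-(α * b)) • g + a • h := by
  have hpres := (transpose_mul_mul_eq_self_iff_of_linearIndependent hbasis).1 hL
  obtain ⟨a, b, hLg⟩ := exists_eq_smul_add_smul_of_dotProduct_mulVec_eq_zero hbasis hgn hhn hn
    (x := L *ᵥ g) (by simpa [hLn, hgn] using hpres 0 2)
  obtain ⟨d, e, hLh⟩ := exists_eq_smul_add_smul_of_dotProduct_mulVec_eq_zero hbasis hgn hhn hn
    (x := L *ᵥ h) (by simpa [hLn, hhn] using hpres 1 2)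
  obtain ⟨h₁, h₂, -⟩ :=
    (transpose_mul_mul_eq_self_iff_of_mulVec_eq hA hbasis hgh hgn hhn hg hα hLg hLh hLn).1 hL
  have h₃ : a * e - b * d = 1 := det_eq_of_mulVec_eq_smul_add_smul hbasis hLg hLh hLn ▸ hdet
  have hd : d = -(α * b) := by linear_combination a * h₂ - α * b * h₃ - d * h₁
  have he : e = a := by linear_combination (-e) * h₁ + a * h₃ + b * h₂
  exact ⟨a, b, h₁, hLg, hd ▸ he ▸ hLh⟩

theorem exists_rotation (hA : A.IsSymm) (hbasis : LinearIndependent K ![g, h, n])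
    (hgh : g ⬝ᵥ A *ᵥ h = 0) (hgn : g ⬝ᵥ A *ᵥ n = 0) (hhn : h ⬝ᵥ A *ᵥ n = 0)
    (hg : g ⬝ᵥ A *ᵥ g ≠ 0) {α : K} (hα : h ⬝ᵥ A *ᵥ h = α * (g ⬝ᵥ A *ᵥ g)) {a b : K}
    (hab : a ^ 2 + α * b ^ 2 = 1) :
    ∃ L : Matrix (Fin 3) (Fin 3) K, Lᵀ * A * L = A ∧ L.det = 1 ∧ L *ᵥ n = n ∧
      L *ᵥ g = a • g + b • h ∧ L *ᵥ h = (-(α * b)) • g + a • h := by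
  set e := basisOfLinearIndependentOfCardEqFinrank' _ hbasis (by simp)
  have he : ⇑e = ![g, h, n] := coe_basisOfLinearIndependentOfCardEqFinrank' ..
  let L := LinearMap.toMatrix' (e.constr K ![a • g + b • h, (-(α * b)) • g + a • h, n])
  have hL : ∀ i, L *ᵥ ![g, h, n] i = ![a • g + b • h, (-(α * b)) • g + a • h, n] i :=
    fun i => by rw [LinearMap.toMatrix'_mulVec, ← he, e.constr_basis]
  have hLg : L *ᵥ g = a • g + b • h := hL 0
  have hLh : L *ᵥ h = (-(α * b)) • g + a • h := hL 1
  have hLn : L *ᵥ n = n := hL 2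
  refine ⟨L, ?_, ?_, hLn, hLg, hLh⟩
  · exact (transpose_mul_mul_eq_self_iff_of_mulVec_eq hA hbasis hgh hgn hhn hg hα hLg hLh hLn).2
      ⟨hab, by ring, by linear_combination α * hab⟩
  · rw [det_eq_of_mulVec_eq_smul_add_smul hbasis hLg hLh hLn]
    linear_combination hab

theorem one_add_mul_sq_ne_zero (hA : A.IsSymm) (hAn : ∀ z, z ⬝ᵥ A *ᵥ z = 0 → z = 0)
    (hgh : g ⬝ᵥ A *ᵥ h = 0) (hind : LinearIndependent K ![g, h]) {α : K}
    (hα : h ⬝ᵥ A *ᵥ h = α * (g ⬝ᵥ A *ᵥ g)) (σ : K) : 1 + α * σ ^ 2 ≠ 0 := by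
  intro hσ
  have hz : (1 : K) • g + σ • h = 0 := hAn _ <| by
    rw [smul_add_smul_dotProduct_mulVec_smul_add_smul hA hgh, hα]
    linear_combination (g ⬝ᵥ A *ᵥ g) * hσ
  exact one_ne_zero (LinearIndependent.pair_iff.1 hind 1 σ hz).1

end OrthogonalBasis

end Matrix

/-- Parametrization of the rotations around a fixed axis `n`, with
respect to an orthogonal basis `(g, h, n)` and `α = Q₊(h)/Q₊(g)`: every
`L ∈ SO(3)_p` fixing `n` either sends `g ↦ -g, h ↦ -h`, or acts on `(g, h)` by
the matrix `R(σ)` for a unique `σ ∈ ℚ_p`, but not both; conversely every such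
prescription defines an element of `SO(3)_p`. -/
theorem rotations_around_axis_parametrization
    (p : ℕ) [Fact p.Prime] (hp : p ≠ 2)
    (v : ℚ_[p]) (hv : ‖v‖ = 1) (hvsq : ¬ IsSquare v)
    (A : Matrix (Fin 3) (Fin 3) ℚ_[p])
    (hA : A = Matrix.diagonal ![1, -v, (p : ℚ_[p])])
    (Q : (Fin 3 → ℚ_[p]) → ℚ_[p]) (hQ : ∀ z, Q z = z ⬝ᵥ A.mulVec z)
    (B : (Fin 3 → ℚ_[p]) → (Fin 3 → ℚ_[p]) → ℚ_[p])
    (hB : ∀ z w, B z w = z ⬝ᵥ A.mulVec w)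
    (g h n : Fin 3 → ℚ_[p])
    (hbasis : LinearIndependent ℚ_[p] ![g, h, n])
    (hgh : B g h = 0) (hgn : B g n = 0) (hhn : B h n = 0)
    (α : ℚ_[p]) (hα : α = Q h / Q g) :
    Q g ≠ 0 ∧
    (∀ L : Matrix (Fin 3) (Fin 3) ℚ_[p],
      Lᵀ * A * L = A → L.det = 1 → L.mulVec n = n →
      Xor' (L.mulVec g = -g ∧ L.mulVec h = -h)
        (∃! σ : ℚ_[p], 1 + α * σ ^ 2 ≠ 0 ∧
          L.mulVec g = ((1 - α * σ ^ 2) / (1 + α * σ ^ 2)) • g +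
            (2 * σ / (1 + α * σ ^ 2)) • h ∧
          L.mulVec h = (-(2 * α * σ) / (1 + α * σ ^ 2)) • g +
            ((1 - α * σ ^ 2) / (1 + α * σ ^ 2)) • h)) ∧
    (∀ σ : ℚ_[p], ∃ L : Matrix (Fin 3) (Fin 3) ℚ_[p],
      Lᵀ * A * L = A ∧ L.det = 1 ∧ L.mulVec n = n ∧
      L.mulVec g = ((1 - α * σ ^ 2) / (1 + α * σ ^ 2)) • g +
        (2 * σ / (1 + α * σ ^ 2)) • h ∧
      L.mulVec h = (-(2 * α * σ) / (1 + α * σ ^ 2)) • g +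
        ((1 - α * σ ^ 2) / (1 + α * σ ^ 2)) • h) ∧
    (∃ L : Matrix (Fin 3) (Fin 3) ℚ_[p],
      Lᵀ * A * L = A ∧ L.det = 1 ∧ L.mulVec n = n ∧
      L.mulVec g = -g ∧ L.mulVec h = -h) := by
  have hsymm : A.IsSymm := hA ▸ isSymm_diagonal _
  have hAn : ∀ z, z ⬝ᵥ A *ᵥ z = 0 → z = 0 := fun z hz =>
    Padic.eq_zero_of_dotProduct_diagonal_mulVec_self_eq_zero hp hv hvsq (hA ▸ hz)
  simp only [hB] at hgh hgn hhn
  simp only [hQ] at hα ⊢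
  have hQ0 : ∀ i, ![g, h, n] i ⬝ᵥ A *ᵥ ![g, h, n] i ≠ 0 := fun i hi =>
    hbasis.ne_zero i (hAn _ hi)
  have hg : g ⬝ᵥ A *ᵥ g ≠ 0 := hQ0 0
  have hα' : h ⬝ᵥ A *ᵥ h = α * (g ⬝ᵥ A *ᵥ g) := by rw [hα, div_mul_cancel₀ _ hg]
  have hind : LinearIndependent ℚ_[p] ![g, h] := by
    convert hbasis.comp Fin.castSucc (Fin.castSucc_injective 2) using 1
    ext i
    fin_cases i <;> rfl
  refine ⟨hg, fun L hL hdet hLn => ?_, fun σ => ?_, ?_⟩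
  · obtain ⟨a, b, hab, hLg, hLh⟩ :=
      exists_rotation_coeffs_of_mulVec_eq_self hsymm hbasis hgh hgn hhn hg (hQ0 2) hα' hL hdet hLn
    exact xor_eq_neg_existsUnique_cayley two_ne_zero hind (hα ▸ div_ne_zero (hQ0 1) hg) hab
      hLg hLh
  · obtain ⟨L, hL, hdet, hLn, hLg, hLh⟩ := exists_rotation hsymm hbasis hgh hgn hhn hg hα'
      (cayley_sq_add_mul_sq (one_add_mul_sq_ne_zero hsymm hAn hgh hind hα' σ))
    refine ⟨L, hL, hdet, hLn, hLg, hLh.trans ?_⟩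
    congr 2
    ring
  · obtain ⟨L, hL, hdet, hLn, hLg, hLh⟩ :=
      exists_rotation hsymm hbasis hgh hgn hhn hg hα' (a := -1) (b := 0) (by ring)
    exact ⟨L, hL, hdet, hLn, by simpa using hLg, by simpa using hLh⟩
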